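/- In particular, if the local rule f of a no-boundary CA F : F_2^n → F_2^{n−d+1} is nonlinear (algebraic degree ≥ 2), then every nonzero component function v·F of the CA is nonlinear (not affine). -/
import Mathlib


/-- The binary Möbius transform, giving the ANF coefficients of `f`. -/
def moebius {n : ℕ} (f : (Fin n → ZMod 2) → ZMod 2) : (Fin n → ZMod 2) → ZMod 2 :=
  fun u => ∑ x ∈ Finset.univ.filter (fun x : Fin n → ZMod 2 => ∀ i, x i ≠ 0 → u i ≠ 0), f x

/-- The algebraic degree of a Boolean function. -/
def degB {n : ℕ} (f : (Fin n → ZMod 2) → ZMod 2) : ℕ :=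
  (Finset.univ.filter (fun u : Fin n → ZMod 2 => moebius f u ≠ 0)).sup
    (fun u => (Finset.univ.filter (fun i => u i ≠ 0)).card)

/-- A Boolean function is affine if it is of the form `x ↦ a·x ⊕ c`. -/
def IsAffine {n : ℕ} (g : (Fin n → ZMod 2) → ZMod 2) : Prop :=
  ∃ (a : Fin n → ZMod 2) (c : ZMod 2), ∀ x, g x = (∑ i, a i * x i) + c



open Finset

/-- standard basis vector -/
def bv {n : ℕ} (i : Fin n) : Fin n → ZMod 2 := fun k => if k = i then 1 else 0

lemma z2 (a : ZMod 2) : a + a = 0 := by revert a; decide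

lemma z2' (a b : ZMod 2) : a + b = 0 ↔ a = b := by revert a b; decide

lemma bv_self_add {n : ℕ} (i : Fin n) : bv i + bv i = 0 := funext (fun k => z2 _)

lemma step_const {n : ℕ} (h : (Fin n → ZMod 2) → ZMod 2)
    (H : ∀ (j : Fin n) x, h (x + bv j) = h x) : ∀ x, h x = h 0 := by
  classical
  suffices key : ∀ (N : ℕ) (x : Fin n → ZMod 2),
      (Finset.univ.filter (fun i => x i ≠ 0)).card ≤ N → h x = h 0 by
    intro x; exact key _ x le_rfl
  intro N
  induction N with
  | zero =>
    intro x hx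
    have : x = 0 := by
      funext i
      simp only [Pi.zero_apply]
      by_contra hi
      have hmem : i ∈ Finset.univ.filter (fun i => x i ≠ 0) := by simp [hi]
      have := Finset.card_pos.mpr ⟨i, hmem⟩
      omega
    rw [this]
  | succ N ih =>
    intro x hx
    by_cases hx0 : x = 0
    · rw [hx0]
    · have : ∃ i, x i ≠ 0 := by
        by_contra hc; push_neg at hc
        exact hx0 (funext (fun i => by simpa using hc i))
      obtain ⟨i, hi⟩ := this
      have hxi : x i = 1 := by
        revert hi; generalize x i = a; revert a; decide
      set y := x + bv i with hy
      have hyk : ∀ k, y k = if k = i then 0 else x k := by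
        intro k
        by_cases hk : k = i
        · subst hk; simp [hy, bv, Pi.add_apply, hxi]; decide
        · simp [hy, bv, Pi.add_apply, hk]
      have hxy : x = y + bv i := by
        rw [hy, add_assoc, bv_self_add, add_zero]
      have hycard : (Finset.univ.filter (fun k => y k ≠ 0)).card ≤ N := by
        have hsub : (Finset.univ.filter (fun k => y k ≠ 0)) ⊆
            (Finset.univ.filter (fun k => x k ≠ 0)).erase i := by
          intro k hk
          simp only [Finset.mem_filter, Finset.mem_univ, true_and] at hk
          rw [hyk k] at hk
          rw [Finset.mem_erase]
          by_cases hki : k = i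
          · simp [hki] at hk
          · simp only [if_neg hki] at hk
            simp [hki, hk]
        have h1 := Finset.card_le_card hsub
        have h2 : i ∈ (Finset.univ.filter (fun k => x k ≠ 0)) := by simp [hi]
        have h3 := Finset.card_erase_of_mem h2
        omega
      rw [hxy, H i y]
      exact ih y hycard


lemma zlem (p q r : ZMod 2) (h : p + q = r) : p = q + r := by revert h; revert p q r; decide

lemma affine_dd {n : ℕ} {g : (Fin n → ZMod 2) → ZMod 2} (h : IsAffine g)
    (x a b : Fin n → ZMod 2) :
    g (x + a + b) + g (x + a) + g (x + b) + g x = 0 := by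
  obtain ⟨w, c, hw⟩ := h
  have expand : ∀ y z : Fin n → ZMod 2,
      (∑ i, w i * (y + z) i) = (∑ i, w i * y i) + (∑ i, w i * z i) := by
    intro y z
    rw [← Finset.sum_add_distrib]
    exact Finset.sum_congr rfl (fun i _ => by simp [Pi.add_apply, mul_add])
  rw [hw, hw, hw, hw, expand (x + a) b, expand x a, expand x b]
  clear hw
  generalize (∑ i, w i * x i : ZMod 2) = P
  generalize (∑ i, w i * a i : ZMod 2) = Q
  generalize (∑ i, w i * b i : ZMod 2) = R
  revert P Q R c; decide

lemma affine_of_derivs_const {n : ℕ} {f : (Fin n → ZMod 2) → ZMod 2}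
    (H : ∀ (j : Fin n) x, f (x + bv j) + f x = f (bv j) + f 0) : IsAffine f := by
  set c : Fin n → ZMod 2 := fun j => f (bv j) + f 0 with hc
  set F : (Fin n → ZMod 2) → ZMod 2 := fun x => f x + ∑ j, c j * x j with hFdef
  have hstep : ∀ (j : Fin n) x, F (x + bv j) = F x := by
    intro j x
    show f (x + bv j) + (∑ k, c k * (x + bv j) k) = f x + ∑ k, c k * x k
    have h1 : f (x + bv j) = f x + c j := zlem _ _ _ (H j x)
    have h2 : (∑ k, c k * (x + bv j) k) = (∑ k, c k * x k) + c j := by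
      have hterm : ∀ k, c k * (x + bv j) k = c k * x k + (if k = j then c j else 0) := by
        intro k
        by_cases hk : k = j
        · subst hk; simp [Pi.add_apply, bv, mul_add]
        · simp [Pi.add_apply, bv, hk]
      rw [Finset.sum_congr rfl (fun k _ => hterm k), Finset.sum_add_distrib]
      simp
    rw [h1, h2]
    generalize f x = p
    generalize (∑ k, c k * x k : ZMod 2) = q
    generalize (c j : ZMod 2) = r
    revert p q r; decide
  have hconst := step_const F hstep
  refine ⟨c, f 0, fun x => ?_⟩
  have hx := hconst x
  show f x = (∑ j, c j * x j) + f 0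
  simp only [hFdef] at hx
  have h0 : (∑ j, c j * (0 : Fin n → ZMod 2) j) = 0 := by simp
  rw [h0, add_zero] at hx
  exact zlem _ _ _ hx

lemma moebius_affine_eq_zero {n : ℕ} {g : (Fin n → ZMod 2) → ZMod 2} (h : IsAffine g)
    (u : Fin n → ZMod 2) (hu : 2 ≤ (Finset.univ.filter (fun i => u i ≠ 0)).card) :
    moebius g u = 0 := by
  classical
  obtain ⟨a, c, hw⟩ := h
  set T := Finset.univ.filter (fun x : Fin n → ZMod 2 => ∀ i, x i ≠ 0 → u i ≠ 0) with hT
  have h2 : 1 < (Finset.univ.filter (fun i => u i ≠ 0)).card := hu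
  obtain ⟨j1, hj1, j2, hj2, hne⟩ := Finset.one_lt_card.mp h2
  simp only [Finset.mem_filter, Finset.mem_univ, true_and] at hj1 hj2
  have hsig : ∀ (j : Fin n), u j ≠ 0 → ∀ x ∈ T, x + bv j ∈ T := by
    intro j hj x hx
    simp only [hT, Finset.mem_filter, Finset.mem_univ, true_and] at hx ⊢
    intro i hi
    by_cases hij : i = j
    · subst hij; exact hj
    · apply hx i; simpa [Pi.add_apply, bv, hij] using hi
  have hzero : ∀ (j : Fin n), u j ≠ 0 → ∀ (φ : (Fin n → ZMod 2) → ZMod 2),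
      (∀ x, φ (x + bv j) = φ x) → ∑ x ∈ T, φ x = 0 := by
    intro j hj φ hφ
    apply Finset.sum_involution (fun x _ => x + bv j)
    · intro x hx; rw [hφ]; exact z2 _
    · intro x hx _ heq
      have := congrFun heq j
      simp only [Pi.add_apply, bv, if_pos rfl] at this
      revert this; generalize x j = t; revert t; decide
    · intro x hx; exact hsig j hj x hx
    · intro x hx; rw [add_assoc, bv_self_add, add_zero]
  have hmain : moebius g u = (∑ i, ∑ x ∈ T, a i * x i) + ∑ x ∈ T, (c : ZMod 2) := by
    show (∑ x ∈ T, g x) = _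
    rw [Finset.sum_congr rfl (fun x _ => hw x), Finset.sum_add_distrib, Finset.sum_comm]
  rw [hmain]
  have hc0 : (∑ x ∈ T, (c : ZMod 2)) = 0 := hzero j1 hj1 _ (fun _ => rfl)
  have hi0 : ∀ i, (∑ x ∈ T, a i * x i) = 0 := by
    intro i
    by_cases h1i : j1 = i
    · refine hzero j2 hj2 _ (fun x => ?_)
      have : i ≠ j2 := by rw [← h1i]; exact hne
      simp [Pi.add_apply, bv, this]
    · refine hzero j1 hj1 _ (fun x => ?_)
      have : i ≠ j1 := fun hh => h1i hh.symm
      simp [Pi.add_apply, bv, this]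
  rw [hc0, Finset.sum_congr rfl (fun i _ => hi0 i)]
  simp

lemma not_affine_of_degB {n : ℕ} {f : (Fin n → ZMod 2) → ZMod 2} (h : 2 ≤ degB f) :
    ¬ IsAffine f := by
  intro ha
  have hle : degB f ≤ 1 := by
    apply Finset.sup_le
    intro u hu
    simp only [Finset.mem_filter, Finset.mem_univ, true_and] at hu
    by_contra hc
    push_neg at hc
    exact hu (moebius_affine_eq_zero ha u hc)
  omega

/-- If the local rule of a no-boundary CA is nonlinear (degree ≥ 2), then
every nonzero component function of the CA is nonlinear (not affine). -/
theorem ca_component_nonlinear (m d : ℕ)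
    (f : (Fin d → ZMod 2) → ZMod 2) (hdeg : 2 ≤ degB f)
    (F : (Fin (m + d) → ZMod 2) → Fin (m + 1) → ZMod 2)
    (hF : ∀ x (i : Fin (m + 1)), F x i =
      f (fun j : Fin d => x ⟨i.val + j.val, by have := i.isLt; have := j.isLt; omega⟩))
    (v : Fin (m + 1) → ZMod 2) (hv : v ≠ 0) :
    ¬ IsAffine (fun x => ∑ i, v i * F x i) := by
  intro hAff
  classical
  have hnf : ¬ IsAffine f := not_affine_of_degB hdeg
  have hnotconst : ¬ ∀ (j : Fin d) x, f (x + bv j) + f x = f (bv j) + f 0 :=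
    fun H => hnf (affine_of_derivs_const H)
  push_neg at hnotconst
  set S : Finset (Fin d) := Finset.univ.filter
      (fun j => ∃ x, f (x + bv j) + f x ≠ f (bv j) + f 0) with hS
  have hSne : S.Nonempty := by
    obtain ⟨j, x, hjx⟩ := hnotconst
    exact ⟨j, by simp only [hS, Finset.mem_filter, Finset.mem_univ, true_and]; exact ⟨x, hjx⟩⟩
  set js := S.max' hSne with hjs
  have hjsS : js ∈ S := S.max'_mem hSne
  have hjconst : ∀ (j : Fin d), js < j → ∀ x, f (x + bv j) + f x = f (bv j) + f 0 := by
    intro j hj x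
    by_contra hne
    have hjS : j ∈ S := by
      simp only [hS, Finset.mem_filter, Finset.mem_univ, true_and]; exact ⟨x, hne⟩
    exact absurd (S.le_max' j hjS) (not_le.mpr hj)
  obtain ⟨xs, hxs⟩ : ∃ x, f (x + bv js) + f x ≠ f (bv js) + f 0 := by
    have := hjsS
    simp only [hS, Finset.mem_filter, Finset.mem_univ, true_and] at this
    exact this
  set Dj : (Fin d → ZMod 2) → ZMod 2 := fun y => f (y + bv js) + f y with hDj
  have hnc : ¬ ∀ (i : Fin d) zz, Dj (zz + bv i) = Dj zz := by
    intro H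
    apply hxs
    have h1 := step_const Dj H xs
    have hD0 : Dj 0 = f (bv js) + f 0 := by simp only [hDj]; rw [zero_add]
    rw [hD0] at h1
    exact h1
  push_neg at hnc
  obtain ⟨iw, z, hiw⟩ := hnc
  have hbrk : f (z + bv iw + bv js) + f (z + bv iw) + f (z + bv js) + f z ≠ 0 := by
    intro h0
    apply hiw
    simp only [hDj]
    revert h0
    generalize f (z + bv iw + bv js) = p
    generalize f (z + bv iw) = q
    generalize f (z + bv js) = r
    generalize f z = s
    revert p q r s; decide
  -- maximal support index of v
  set Sv : Finset (Fin (m+1)) := Finset.univ.filter (fun i => v i ≠ 0) with hSv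
  have hSvne : Sv.Nonempty := by
    by_contra hc
    rw [Finset.not_nonempty_iff_eq_empty] at hc
    apply hv; funext i
    simp only [Pi.zero_apply]
    by_contra hvi
    have hmem : i ∈ Sv := by
      simp only [hSv, Finset.mem_filter, Finset.mem_univ, true_and]; exact hvi
    rw [hc] at hmem
    exact absurd hmem (Finset.notMem_empty i)
  set i0 := Sv.max' hSvne with hi0
  have hvi0 : v i0 ≠ 0 := by
    have := Sv.max'_mem hSvne
    simp only [hSv, Finset.mem_filter, Finset.mem_univ, true_and] at this
    exact this
  have hvgt : ∀ i : Fin (m+1), i0 < i → v i = 0 := by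
    intro i hi
    by_contra hne
    have hmem : i ∈ Sv := by
      simp only [hSv, Finset.mem_filter, Finset.mem_univ, true_and]; exact hne
    exact absurd (Sv.le_max' i hmem) (not_le.mpr hi)
  have hlt : ∀ (i' : Fin (m+1)) (j : Fin d), i'.val + j.val < m + d := by
    intro i' j; have := i'.isLt; have := j.isLt; omega
  set X : Fin (m+d) → ZMod 2 := fun k =>
    if h : i0.val ≤ k.val ∧ k.val < i0.val + d then z ⟨k.val - i0.val, by omega⟩ else 0 with hX
  set A : Fin (m+d) → ZMod 2 := bv ⟨i0.val + iw.val, hlt i0 iw⟩ with hA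
  set B : Fin (m+d) → ZMod 2 := bv ⟨i0.val + js.val, hlt i0 js⟩ with hB
  set w : Fin (m+1) → (Fin (m+d) → ZMod 2) → (Fin d → ZMod 2) :=
    fun i' Y => fun j => Y ⟨i'.val + j.val, hlt i' j⟩ with hwdef
  have hwadd : ∀ i' Y Z, w i' (Y + Z) = w i' Y + w i' Z := fun i' Y Z => rfl
  have hFw : ∀ Y i', F Y i' = f (w i' Y) := fun Y i' => hF Y i'
  have hwX : w i0 X = z := by
    funext j
    show X ⟨i0.val + j.val, hlt i0 j⟩ = z j
    simp only [hX]
    have hcond : i0.val ≤ (⟨i0.val + j.val, hlt i0 j⟩ : Fin (m+d)).val ∧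
        (⟨i0.val + j.val, hlt i0 j⟩ : Fin (m+d)).val < i0.val + d := by
      simp only []
      constructor
      · omega
      · have := j.isLt; omega
    rw [dif_pos hcond]
    exact congrArg z (Fin.ext (by simp))
  have hwA : w i0 A = bv iw := by
    funext j
    show A ⟨i0.val + j.val, hlt i0 j⟩ = bv iw j
    simp only [hA, bv]
    by_cases hj : j = iw
    · subst hj; simp
    · rw [if_neg, if_neg hj]
      intro hcontra
      apply hj
      have hval : i0.val + j.val = i0.val + iw.val := congrArg Fin.val hcontra
      exact Fin.ext (by omega)
  have hwB : w i0 B = bv js := by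
    funext j
    show B ⟨i0.val + j.val, hlt i0 j⟩ = bv js j
    simp only [hB, bv]
    by_cases hj : j = js
    · subst hj; simp
    · rw [if_neg, if_neg hj]
      intro hcontra
      apply hj
      have hval : i0.val + j.val = i0.val + js.val := congrArg Fin.val hcontra
      exact Fin.ext (by omega)
  -- the affine relation
  have hzero := affine_dd hAff X A B
  have hsum : (∑ i', v i' * F (X+A+B) i') + (∑ i', v i' * F (X+A) i') +
      (∑ i', v i' * F (X+B) i') + (∑ i', v i' * F X i') =
      ∑ i', v i' * (f (w i' X + w i' A + w i' B) + f (w i' X + w i' A) +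
        f (w i' X + w i' B) + f (w i' X)) := by
    rw [← Finset.sum_add_distrib, ← Finset.sum_add_distrib, ← Finset.sum_add_distrib]
    apply Finset.sum_congr rfl
    intro i' _
    rw [hFw (X+A+B) i', hFw (X+A) i', hFw (X+B) i', hFw X i',
      hwadd i' (X+A) B, hwadd i' X A, hwadd i' X B]
    ring
  rw [hsum] at hzero
  have hterm : ∀ i' ∈ Finset.univ, i' ≠ i0 →
      v i' * (f (w i' X + w i' A + w i' B) + f (w i' X + w i' A) +
        f (w i' X + w i' B) + f (w i' X)) = 0 := by
    intro i' _ hne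
    rcases lt_or_gt_of_ne hne with hlt' | hgt'
    · -- i' < i0
      have hi'lt : i'.val < i0.val := hlt'
      by_cases hcase : i0.val + js.val < i'.val + d
      · -- window of i' sees B at position j' > js
        have hj'bound : i0.val + js.val - i'.val < d := by omega
        set j' : Fin d := ⟨i0.val + js.val - i'.val, hj'bound⟩ with hj'
        have hwb : w i' B = bv j' := by
          funext j
          show B ⟨i'.val + j.val, hlt i' j⟩ = bv j' j
          simp only [hB, bv]
          by_cases hj : j = j'
          · subst hj
            rw [if_pos, if_pos rfl]
            exact Fin.ext (by simp only [hj']; omega)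
          · rw [if_neg, if_neg hj]
            intro hcontra
            apply hj
            have hval : i'.val + j.val = i0.val + js.val := congrArg Fin.val hcontra
            exact Fin.ext (by simp only [hj']; omega)
        have hjsj' : js < j' := by
          rw [Fin.lt_def]
          simp only [hj']
          omega
        have hc := hjconst j' hjsj'
        rw [hwb]
        have e1 : f (w i' X + w i' A + bv j') + f (w i' X + w i' A) = f (bv j') + f 0 :=
          hc (w i' X + w i' A)
        have e2 : f (w i' X + bv j') + f (w i' X) = f (bv j') + f 0 := hc (w i' X)
        have hkey : ∀ t1 t2 t3 t4 C : ZMod 2, t1 + t2 = C → t3 + t4 = C →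
            t1 + t2 + t3 + t4 = 0 := by decide
        rw [hkey _ _ _ _ _ e1 e2, mul_zero]
      · -- window of i' does not see B
        have hwb : w i' B = 0 := by
          funext j
          show B ⟨i'.val + j.val, hlt i' j⟩ = 0
          simp only [hB, bv]
          rw [if_neg]
          intro hcontra
          have hval : i'.val + j.val = i0.val + js.val := congrArg Fin.val hcontra
          have := j.isLt; omega
        rw [hwb, add_zero, add_zero]
        have hpq : ∀ p q : ZMod 2, p + p + q + q = 0 := by decide
        rw [hpq (f (w i' X + w i' A)) (f (w i' X)), mul_zero]
    · rw [hvgt i' hgt', zero_mul]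
  rw [Finset.sum_eq_single i0 hterm (fun h => absurd (Finset.mem_univ i0) h)] at hzero
  rw [hwX, hwA, hwB] at hzero
  have hv1 : v i0 = 1 := by
    revert hvi0; generalize v i0 = t; revert t; decide
  rw [hv1, one_mul] at hzero
  exact hbrk hzero
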